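/- arXiv:1004.4623 — 10 statements merged into one kernel-verified Lean document; each statement's English description precedes it below -/
import Mathlib

section
/- For every positive integer n, the number 2(2n+1)·binom(2n,n) divides binom(6n,3n)·binom(3n,n). -/
/-!
Clearing denominators, the claim becomes `2 (2n+1)! (3n)! (2n)! ∣ (6n)! n!`. By Legendre's
formula it suffices that `⌊(2n+1)/q⌋ + ⌊3n/q⌋ + ⌊2n/q⌋ ≤ ⌊6n/q⌋ + ⌊n/q⌋` for every `q ≥ 2`.
Every term is controlled by `s = ⌊6n/q⌋`, e.g. `⌊3n/q⌋ = ⌊s/2⌋` and `⌊(2n+1)/q⌋ ≤ ⌊(s+1)/3⌋`,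
so this is a check on `s mod 6`. The extra factor `2` comes from the largest power `q = 2^k ≤ 6n`:
there `s = 1` and the inequality is strict.
-/

open Nat Finset

lemma div_eq_div_div_of_mul_eq {a b q k : ℕ} (hk : 0 < k) (h : k * a = b) :
    a / q = b / q / k := by
  rw [← h, Nat.div_div_eq_div_mul, mul_comm q k, Nat.mul_div_mul_left _ _ hk]

lemma two_mul_add_one_div_le {n q : ℕ} (hq : 2 ≤ q) :
    (2 * n + 1) / q ≤ (6 * n / q + 1) / 3 := by
  rcases hq.eq_or_lt with rfl | hq
  · omega
  calc (2 * n + 1) / q = (6 * n + 3) / q / 3 := div_eq_div_div_of_mul_eq three_pos (by ring)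
    _ ≤ (6 * n + q) / q / 3 := by gcongr; omega
    _ = (6 * n / q + 1) / 3 := by rw [Nat.add_div_right _ (by omega)]

lemma legendre_summand_le {n q : ℕ} (hq : 2 ≤ q) :
    (2 * n + 1) / q + 3 * n / q + 2 * n / q ≤ 6 * n / q + n / q := by
  have h1 := two_mul_add_one_div_le (n := n) hq
  have h2 : 3 * n / q = 6 * n / q / 2 := div_eq_div_div_of_mul_eq two_pos (by ring)
  have h3 : 2 * n / q = 6 * n / q / 3 := div_eq_div_div_of_mul_eq three_pos (by ring)
  have h6 : n / q = 6 * n / q / 6 := div_eq_div_div_of_mul_eq (by norm_num) (by ring)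
  omega

lemma legendre_summand_lt {n q : ℕ} (h : 6 * n / q = 1) :
    (2 * n + 1) / q + 3 * n / q + 2 * n / q < 6 * n / q + n / q := by
  have hq : 2 ≤ q := by
    by_contra! hq
    interval_cases q <;> omega
  have h1 := two_mul_add_one_div_le (n := n) hq
  have h2 : 3 * n / q = 6 * n / q / 2 := div_eq_div_div_of_mul_eq two_pos (by ring)
  have h3 : 2 * n / q = 6 * n / q / 3 := div_eq_div_div_of_mul_eq three_pos (by ring)
  have h6 : n / q = 6 * n / q / 6 := div_eq_div_div_of_mul_eq (by norm_num) (by ring)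
  omega

lemma legendre_sum_le {p : ℕ} (hp : 2 ≤ p) (n b : ℕ) :
    ∑ i ∈ Ico 1 b, ((2 * n + 1) / p ^ i + 3 * n / p ^ i + 2 * n / p ^ i) ≤
      ∑ i ∈ Ico 1 b, (6 * n / p ^ i + n / p ^ i) := by
  refine sum_le_sum fun i hi => legendre_summand_le ?_
  exact hp.trans (Nat.le_self_pow (by simp at hi; omega) p)

lemma legendre_sum_two_lt {n : ℕ} (hn : 0 < n) :
    ∑ i ∈ Ico 1 (6 * n + 1), ((2 * n + 1) / 2 ^ i + 3 * n / 2 ^ i + 2 * n / 2 ^ i) <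
      ∑ i ∈ Ico 1 (6 * n + 1), (6 * n / 2 ^ i + n / 2 ^ i) := by
  refine sum_lt_sum (fun i hi => legendre_summand_le ?_) ⟨log 2 (6 * n), ?_, ?_⟩
  · exact le_self_pow (by simp at hi; omega) 2
  · simp only [mem_Ico]
    exact ⟨log_pos one_lt_two (by omega), (log_le_self 2 _).trans_lt (lt_add_one _)⟩
  · refine legendre_summand_lt (Nat.div_eq_of_lt_le ?_ ?_)
    · simpa using pow_log_le_self 2 (by omega : 6 * n ≠ 0)
    · simpa [pow_succ, mul_comm] using lt_pow_succ_log_self one_lt_two (6 * n)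

lemma factorization_factorial_of_le {p m N : ℕ} (hp : p.Prime) (hm : m ≤ N) :
    (m !).factorization p = ∑ i ∈ Ico 1 (N + 1), m / p ^ i :=
  factorization_factorial hp ((log_le_self p m).trans_lt (by omega))

theorem two_mul_factorial_dvd {n : ℕ} (hn : 0 < n) :
    2 * (2 * n + 1)! * (3 * n)! * (2 * n)! ∣ (6 * n)! * n ! := by
  rw [← factorization_le_iff_dvd (by positivity) (by positivity)]
  intro p
  rcases em' p.Prime with hp | hp
  · simp [factorization_eq_zero_of_not_prime _ hp]
  simp only [factorization_mul, mul_ne_zero_iff, factorial_ne_zero, two_ne_zero, ne_eq,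
    not_false_eq_true, and_self, Finsupp.coe_add, Pi.add_apply]
  have legendre {m} (hm : m ≤ 6 * n) := factorization_factorial_of_le hp hm
  rw [legendre (m := 2 * n + 1) (by omega), legendre (m := 3 * n) (by omega),
    legendre (m := 2 * n) (by omega), legendre le_rfl, legendre (m := n) (by omega),
    prime_two.factorization, Finsupp.single_apply]
  split_ifs with hp2
  · subst hp2
    have := legendre_sum_two_lt hn
    simp only [sum_add_distrib] at this
    omega
  · have := legendre_sum_le hp.two_le n (6 * n + 1)
    simp only [sum_add_distrib] at this
    omega

theorem stmt_0 (n : ℕ) (hn : 0 < n) :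
    2 * (2 * n + 1) * Nat.choose (2 * n) n ∣
      Nat.choose (6 * n) (3 * n) * Nat.choose (3 * n) n := by
  have e2 := add_choose_mul_factorial_mul_factorial n n
  have e3 := add_choose_mul_factorial_mul_factorial (2 * n) n
  have e6 := add_choose_mul_factorial_mul_factorial (3 * n) (3 * n)
  rw [← two_mul] at e2
  rw [show 2 * n + n = 3 * n by ring] at e3
  rw [show 3 * n + 3 * n = 6 * n by ring] at e6
  rw [← Nat.mul_dvd_mul_iff_right (by positivity : 0 < n ! * n ! * (3 * n)! * (2 * n)!)]
  convert two_mul_factorial_dvd hn using 1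
  · rw [factorial_succ, ← e2]; ring
  · rw [← e6, ← e3]; ring
end

section
/- For all nonnegative integers k and n, binom(2k,k) divides binom(4n+2k+2, 2n+k+1)·binom(2n+k+1, 2k)·binom(2n−k+1, n). -/
/-!
By Kummer's theorem, `v_p (choose (a + b) a)` is the number of carries when `a` and `b` are added
in base `p`. For `k ≤ n + 1` write `e = n + 1 - k` and `M = 2n + k + 1 = (n + e) + 2k`; the product
is `choose (2M) M * choose M (2k) * choose (n + e) n`. For odd `p`, at every level `p^i` where
`k + k` carries, one of `M + M`, `2k + (n + e)`, `n + e` carries as well. For `p = 2` the carries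
of `k + k` at level `2^i` are matched by carries of `M + M` or `2k + (n + e)` at level `2^(i+1)`.
For `k > n + 1` the product vanishes.
-/

open Nat Finset

lemma Finset.card_filter_or_le {α : Type*} [DecidableEq α] (s : Finset α) (p q : α → Prop)
    [DecidablePred p] [DecidablePred q] : #{a ∈ s | p a ∨ q a} ≤ #{a ∈ s | p a} + #{a ∈ s | q a} := by
  rw [filter_or]
  exact card_union_le _ _

lemma carry_of_carry_double_of_odd {q k n e : ℕ} (hq : Odd q) (he : n + 1 = k + e)
    (hk : q ≤ k % q + k % q) :
    q ≤ (n + e + 2 * k) % q + (n + e + 2 * k) % q ∨ q ≤ 2 * k % q + (n + e) % q ∨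
      q ≤ n % q + e % q := by
  -- `add_mod_add_ite` turns each carry into a linear relation between residues; oddness of `q`
  -- upgrades `q ≤ 2 (k % q)` to `q < 2 (k % q)`, which is what excludes three carry-free sums.
  obtain ⟨j, rfl⟩ := hq
  have hq0 : 0 < 2 * j + 1 := by omega
  have hkk := add_mod_add_ite k k (2 * j + 1)
  have hMM := add_mod_add_ite (n + e + 2 * k) (n + e + 2 * k) (2 * j + 1)
  have hkd := add_mod_add_ite (2 * k) (n + e) (2 * j + 1)
  have hne := add_mod_add_ite n e (2 * j + 1)
  have hke := add_mod_add_ite k e (2 * j + 1)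
  have hn1 := add_mod_add_ite n 1 (2 * j + 1)
  rw [← two_mul] at hkk
  rw [add_comm (2 * k)] at hkd
  rw [← he] at hke
  have := mod_lt k hq0
  have := mod_lt n hq0
  have := mod_lt e hq0
  have := mod_lt (n + 1) hq0
  have := mod_lt (2 * k) hq0
  have := mod_lt (n + e) hq0
  have := mod_lt (n + e + 2 * k) hq0
  have := mod_le 1 (2 * j + 1)
  split_ifs at * <;> omega

lemma carry_succ_of_carry_double {q k d : ℕ} (hk : q ≤ k % q + k % q) :
    2 * q ≤ (d + 2 * k) % (2 * q) + (d + 2 * k) % (2 * q) ∨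
      2 * q ≤ 2 * k % (2 * q) + d % (2 * q) := by
  have hkd := add_mod_add_ite (2 * k) d (2 * q)
  rw [add_comm (2 * k), mul_mod_mul_left] at hkd
  rw [mul_mod_mul_left]
  split_ifs at hkd <;> omega

lemma factorization_two_choose_double_le (k d : ℕ) :
    (choose (k + k) k).factorization 2 ≤
      (choose (d + 2 * k + (d + 2 * k)) (d + 2 * k)).factorization 2 +
        (choose (d + 2 * k) (2 * k)).factorization 2 := by
  set b := d + 2 * k + (d + 2 * k) + 1
  rw [factorization_choose' prime_two (b := b) ((log_le_self 2 _).trans_lt (by omega)),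
    factorization_choose' prime_two (b := b + 1) ((log_le_self 2 _).trans_lt (by omega)),
    factorization_choose' prime_two (b := b + 1) ((log_le_self 2 _).trans_lt (by omega))]
  refine (card_le_card_of_injOn (· + 1) ?_ (add_left_injective 1).injOn).trans
    (card_filter_or_le _ _ _)
  intro i hi
  simp only [coe_filter, mem_Ico, Set.mem_ofPred_eq] at hi ⊢
  rw [pow_succ']
  exact ⟨by omega, carry_succ_of_carry_double hi.2⟩

lemma factorization_choose_double_le_of_odd {p k n e : ℕ} (hp : p.Prime) (hodd : Odd p)
    (he : n + 1 = k + e) :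
    (choose (k + k) k).factorization p ≤
      (choose (n + e + 2 * k + (n + e + 2 * k)) (n + e + 2 * k)).factorization p +
        (choose (n + e + 2 * k) (2 * k)).factorization p +
        (choose (e + n) n).factorization p := by
  set b := n + e + 2 * k + (n + e + 2 * k) + 1
  rw [factorization_choose' hp (b := b) ((log_le_self p _).trans_lt (by omega)),
    factorization_choose' hp (b := b) ((log_le_self p _).trans_lt (by omega)),
    factorization_choose' hp (b := b) ((log_le_self p _).trans_lt (by omega)),
    factorization_choose' hp (b := b) ((log_le_self p _).trans_lt (by omega)), add_assoc]
  refine (card_le_card (monotone_filter_right _ fun _ _ hi ↦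
    carry_of_carry_double_of_odd hodd.pow he hi)).trans ?_
  exact (card_filter_or_le _ _ _).trans (Nat.add_le_add_left (card_filter_or_le _ _ _) _)

lemma centralBinom_dvd_choose_mul_choose_mul_choose {k n e : ℕ} (he : n + 1 = k + e) :
    centralBinom k ∣
      choose (n + e + 2 * k + (n + e + 2 * k)) (n + e + 2 * k) * choose (n + e + 2 * k) (2 * k) *
        choose (e + n) n := by
  have hk : centralBinom k = choose (k + k) k := by rw [centralBinom, two_mul]
  have h₁ : choose (n + e + 2 * k + (n + e + 2 * k)) (n + e + 2 * k) ≠ 0 :=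
    (choose_pos (by omega)).ne'
  have h₂ : choose (n + e + 2 * k) (2 * k) ≠ 0 := (choose_pos (by omega)).ne'
  have h₃ : choose (e + n) n ≠ 0 := (choose_pos (by omega)).ne'
  rw [hk, ← factorization_prime_le_iff_dvd (choose_pos (by omega)).ne'
    (mul_ne_zero (mul_ne_zero h₁ h₂) h₃)]
  intro p hp
  rw [Nat.factorization_mul (mul_ne_zero h₁ h₂) h₃, Nat.factorization_mul h₁ h₂]
  rcases hp.eq_two_or_odd' with rfl | hodd
  · exact (factorization_two_choose_double_le k (n + e)).trans (Nat.le_add_right _ _)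
  · exact factorization_choose_double_le_of_odd hp hodd he

theorem stmt_1 (k n : ℕ) :
    Nat.choose (2 * k) k ∣
      Nat.choose (4 * n + 2 * k + 2) (2 * n + k + 1) *
        Nat.choose (2 * n + k + 1) (2 * k) *
        Nat.choose (2 * n + 1 - k) n := by
  rw [← centralBinom_eq_two_mul_choose]
  rcases le_or_gt k (n + 1) with hk | hk
  · obtain ⟨e, he⟩ := exists_add_of_le hk
    rw [show 4 * n + 2 * k + 2 = n + e + 2 * k + (n + e + 2 * k) by omega,
      show 2 * n + k + 1 = n + e + 2 * k by omega, show 2 * n + 1 - k = e + n by omega]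
    exact centralBinom_dvd_choose_mul_choose_mul_choose he
  · have : choose (2 * n + k + 1) (2 * k) * choose (2 * n + 1 - k) n = 0 := by
      rcases le_or_gt k (2 * n + 1) with h | h
      · rw [choose_eq_zero_of_lt (by omega : 2 * n + 1 - k < n), mul_zero]
      · rw [choose_eq_zero_of_lt (by omega : 2 * n + k + 1 < 2 * k), zero_mul]
    rw [mul_assoc, this, mul_zero]
    exact dvd_zero _
end

section
/- Let m > 1 be an integer. Then for every integer n one has ⌊n/m⌋ + ⌊6n/m⌋ ≥ ⌊2n/m⌋ + ⌊(2n+1)/m⌋ + ⌊3n/m⌋. -/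
/-!
Since `n` is an integer, `⌊a / m⌋` is the Euclidean quotient `a / m` for each numerator `a`.
Writing `n = m q + r` with `0 ≤ r < m`, both sides grow by `7 q`, so it suffices to treat
`0 ≤ r < m`. There the quotients of `2 r`, `2 r + 1` and `3 r` lie in `{0, 1}`, `{0, 1}` and
`{0, 1, 2}`, and for each of the finitely many choices the inequality is linear in `r` and `m`.
-/

theorem mul_add_ediv_eq_mul_ediv_add (k c n : ℤ) {m : ℤ} (hm : m ≠ 0) :
    (k * n + c) / m = k * (n / m) + (k * (n % m) + c) / m := by
  conv_lhs => rw [← Int.emod_add_mul_ediv n m]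
  rw [show k * (n % m + m * (n / m)) + c = k * (n % m) + c + k * (n / m) * m by ring,
    Int.add_mul_ediv_right _ _ hm, add_comm]

theorem ediv_bounds_of_lt_mul {a m k : ℤ} (hm : 0 < m) (ha : 0 ≤ a) (hak : a < k * m) :
    a / m * m ≤ a ∧ a < (a / m + 1) * m ∧ 0 ≤ a / m ∧ a / m < k :=
  ⟨Int.ediv_mul_le a hm.ne', Int.lt_ediv_add_one_mul_self a hm, Int.ediv_nonneg ha hm.le,
    Int.ediv_lt_of_lt_mul hm hak⟩

theorem two_mul_ediv_add_three_mul_ediv_le_of_lt {m r : ℤ} (hm : 1 < m) (hr : 0 ≤ r)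
    (hrm : r < m) :
    2 * r / m + (2 * r + 1) / m + 3 * r / m ≤ 6 * r / m := by
  have hm0 : 0 < m := by omega
  rw [Int.le_ediv_iff_mul_le hm0]
  obtain ⟨hA, hA', hA₀, hA₂⟩ :=
    ediv_bounds_of_lt_mul (a := 2 * r) (k := 2) hm0 (by omega) (by omega)
  obtain ⟨hB, hB', hB₀, hB₂⟩ :=
    ediv_bounds_of_lt_mul (a := 2 * r + 1) (k := 2) hm0 (by omega) (by omega)
  obtain ⟨hC, hC', hC₀, hC₃⟩ :=
    ediv_bounds_of_lt_mul (a := 3 * r) (k := 3) hm0 (by omega) (by omega)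
  interval_cases 2 * r / m <;> interval_cases (2 * r + 1) / m <;> interval_cases 3 * r / m <;>
    omega

theorem two_mul_ediv_add_three_mul_ediv_le {m : ℤ} (hm : 1 < m) (n : ℤ) :
    2 * n / m + (2 * n + 1) / m + 3 * n / m ≤ n / m + 6 * n / m := by
  have hm0 : 0 < m := by omega
  have hr₀ := Int.emod_nonneg n hm0.ne'
  have hrm := Int.emod_lt_of_pos n hm0
  have hr : n % m / m = 0 := Int.ediv_eq_zero_of_lt hr₀ hrm
  have h1 := mul_add_ediv_eq_mul_ediv_add 1 0 n hm0.ne'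
  have h2 := mul_add_ediv_eq_mul_ediv_add 2 0 n hm0.ne'
  have h2' := mul_add_ediv_eq_mul_ediv_add 2 1 n hm0.ne'
  have h3 := mul_add_ediv_eq_mul_ediv_add 3 0 n hm0.ne'
  have h6 := mul_add_ediv_eq_mul_ediv_add 6 0 n hm0.ne'
  simp only [one_mul, add_zero] at h1 h2 h3 h6
  have := two_mul_ediv_add_three_mul_ediv_le_of_lt hm hr₀ hrm
  omega

theorem stmt_5 (m : ℤ) (hm : 1 < m) (n : ℤ) :
    ⌊(n : ℚ) / (m : ℚ)⌋ + ⌊(6 * (n : ℚ)) / (m : ℚ)⌋ ≥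
      ⌊(2 * (n : ℚ)) / (m : ℚ)⌋ + ⌊(2 * (n : ℚ) + 1) / (m : ℚ)⌋ +
        ⌊(3 * (n : ℚ)) / (m : ℚ)⌋ := by
  simp only [Int.floor_div_cast_of_nonneg (by omega : (0 : ℤ) ≤ m)]
  norm_cast
  simp only [Int.floor_intCast]
  exact two_mul_ediv_add_three_mul_ediv_le hm n
end

section
/- Let m be a positive integer and let k, n be integers. If it is not the case that m is even with k ≡ m/2 (mod m) and n+1 ≡ m/2 (mod m), then ⌊(4n+2k+2)/m⌋ − ⌊(2n+k+1)/m⌋ + 2⌊k/m⌋ − 2⌊2k/m⌋ ≥ ⌊n/m⌋ + ⌊(n−k+1)/m⌋. -/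
/-!
Both sides change by the same amount when `k` or `n` is shifted by `m`, so one may assume
`0 ≤ k, n < m`. Writing `v = 2n + k + 1`, the first two floors combine to `⌊(2v + m) / 2m⌋`
(`⌊2x⌋ - ⌊x⌋ = ⌊x + 1/2⌋`), and what remains is a comparison of single floors, split according
to whether `2k < m` and whether `n ≥ k - 1`. Only in the last case is the margin thin, and
there the inequality fails exactly in the excluded configuration `m = 2k = 2n + 2`.
-/

theorem Int.floor_intCast_div_intCast_of_pos {K : Type*} [Field K] [LinearOrder K]
    [IsStrictOrderedRing K] [FloorRing K] (a : ℤ) {m : ℤ} (hm : 0 < m) :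
    ⌊(a : K) / m⌋ = a / m := by
  lift m to ℕ using hm.le
  rw [Int.cast_natCast, Int.floor_div_natCast, Int.floor_intCast]

theorem Int.exists_emod_add_mul {m : ℤ} (hm : 0 < m) (v : ℤ) :
    ∃ t q, 0 ≤ t ∧ t < m ∧ v = t + m * q :=
  ⟨v % m, v / m, Int.emod_nonneg v hm.ne', Int.emod_lt_of_pos v hm,
    (Int.emod_add_mul_ediv v m).symm⟩

theorem Int.two_mul_ediv_sub_ediv {m : ℤ} (hm : 0 < m) (v : ℤ) :
    2 * v / m - v / m = (2 * v + m) / (2 * m) := by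
  obtain ⟨t, q, ht0, ht, rfl⟩ := Int.exists_emod_add_mul hm v
  rw [show 2 * (t + m * q) + m = 2 * t + m + 2 * m * q by ring,
    show 2 * (t + m * q) = 2 * t + m * (2 * q) by ring,
    Int.add_mul_ediv_left _ _ hm.ne', Int.add_mul_ediv_left _ _ hm.ne',
    Int.add_mul_ediv_left _ _ (by omega), Int.ediv_eq_zero_of_lt ht0 ht]
  suffices 2 * t / m = (2 * t + m) / (2 * m) by omega
  rcases lt_or_ge (2 * t) m with h | h
  · rw [Int.ediv_eq_zero_of_lt (by omega) h, Int.ediv_eq_zero_of_lt (by omega) (by omega)]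
  · rw [(Int.ediv_eq_iff_of_pos (y := 1) hm).2 ⟨by omega, by omega⟩,
      (Int.ediv_eq_iff_of_pos (y := 1) (by omega)).2 ⟨by omega, by omega⟩]

theorem ediv_combination_le_of_residues {m r s : ℤ} (hm : 0 < m) (hr0 : 0 ≤ r) (hr : r < m)
    (hs0 : 0 ≤ s) (hs : s < m) (hex : ¬(m = 2 * r ∧ r = s + 1)) :
    (s - r + 1) / m + 2 * (2 * r / m) ≤ (2 * (2 * s + r + 1) + m) / (2 * m) := by
  rcases lt_or_ge (2 * r) m with hr2 | hr2
  · rw [Int.ediv_eq_zero_of_lt (by omega) hr2, mul_zero, add_zero,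
      ← Int.mul_ediv_mul_of_pos _ _ two_pos]
    exact Int.ediv_le_ediv (by omega) (by omega)
  rw [(Int.ediv_eq_iff_of_pos (x := 2 * r) (y := 1) hm).2 ⟨by omega, by omega⟩]
  rcases lt_or_ge s (r - 1) with hsr | hsr
  · rw [(Int.ediv_eq_iff_of_pos (y := -1) hm).2 ⟨by omega, by omega⟩,
      Int.le_ediv_iff_mul_le (by omega)]
    omega
  · -- `4 * s + 2 * r + 2 ≥ 3 * m - 2`; parity and `hex` exclude `3 * m - 1` and `3 * m - 2`
    rw [Int.ediv_eq_zero_of_lt (by omega) (by omega), Int.le_ediv_iff_mul_le (by omega)]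
    omega

theorem ediv_combination_le {m : ℤ} (hm : 0 < m) (k n : ℤ)
    (hex : ¬(m = 2 * (k % m) ∧ k % m = n % m + 1)) :
    n / m + (n - k + 1) / m ≤
      (4 * n + 2 * k + 2) / m - (2 * n + k + 1) / m + 2 * (k / m) - 2 * (2 * k / m) := by
  rw [show 4 * n + 2 * k + 2 = 2 * (2 * n + k + 1) by ring, Int.two_mul_ediv_sub_ediv hm]
  obtain ⟨r, q, hr0, hr, rfl⟩ := Int.exists_emod_add_mul hm k
  obtain ⟨s, p, hs0, hs, rfl⟩ := Int.exists_emod_add_mul hm n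
  rw [Int.add_mul_emod_self_left, Int.add_mul_emod_self_left, Int.emod_eq_of_lt hr0 hr,
    Int.emod_eq_of_lt hs0 hs] at hex
  rw [show 2 * (2 * (s + m * p) + (r + m * q) + 1) + m =
      2 * (2 * s + r + 1) + m + 2 * m * (2 * p + q) by ring,
    show s + m * p - (r + m * q) + 1 = s - r + 1 + m * (p - q) by ring,
    show 2 * (r + m * q) = 2 * r + m * (2 * q) by ring,
    Int.add_mul_ediv_left _ _ (show 2 * m ≠ 0 by omega), Int.add_mul_ediv_left _ _ hm.ne',
    Int.add_mul_ediv_left _ _ hm.ne', Int.add_mul_ediv_left _ _ hm.ne',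
    Int.add_mul_ediv_left _ _ hm.ne', Int.ediv_eq_zero_of_lt hr0 hr, Int.ediv_eq_zero_of_lt hs0 hs]
  linarith [ediv_combination_le_of_residues hm hr0 hr hs0 hs hex]

theorem stmt_6 (m : ℤ) (hm : 0 < m) (k n : ℤ)
    (h : ¬ (Even m ∧ Int.ModEq m k (m / 2) ∧ Int.ModEq m (n + 1) (m / 2))) :
    ⌊(4 * (n : ℚ) + 2 * (k : ℚ) + 2) / (m : ℚ)⌋ - ⌊(2 * (n : ℚ) + (k : ℚ) + 1) / (m : ℚ)⌋ +
        2 * ⌊(k : ℚ) / (m : ℚ)⌋ - 2 * ⌊(2 * (k : ℚ)) / (m : ℚ)⌋ ≥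
      ⌊(n : ℚ) / (m : ℚ)⌋ + ⌊((n : ℚ) - (k : ℚ) + 1) / (m : ℚ)⌋ := by
  have hex : ¬(m = 2 * (k % m) ∧ k % m = n % m + 1) := by
    rintro ⟨hm2, hkn⟩
    have hhalf : m / 2 = k % m := by omega
    refine h ⟨⟨k % m, by omega⟩, ?_, ?_⟩
    · rw [hhalf]
      exact (Int.mod_modEq k m).symm
    · rw [hhalf, hkn]
      exact ((Int.mod_modEq n m).add_right 1).symm
  have hcast := ediv_combination_le hm k n hex
  simp only [← Int.floor_intCast_div_intCast_of_pos (K := ℚ) _ hm] at hcast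
  push_cast at hcast
  linarith
end

section
/- Let m be an even positive integer and let k, n be integers with k ≡ m/2 (mod m) and n+1 ≡ m/2 (mod m). Then ⌊n/m⌋ + ⌊(n−k+1)/m⌋ = ⌊(4n+2k+2)/m⌋ − ⌊(2n+k+1)/m⌋ + 2⌊k/m⌋ − 2⌊2k/m⌋ + 1. -/
/-! With m = 2t the hypotheses say k = t + m a and n = t - 1 + m b. Each numerator is then
m q + r with an explicit integer q and 0 ≤ r < m, so every floor equals its q and the identity
reduces to a linear identity in a and b. -/

theorem Int.floor_div_eq_of_eq_mul_add {K : Type*} [Field K] [LinearOrder K]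
    [IsStrictOrderedRing K] [FloorRing K] {x m r : K} {q : ℤ} (hm : 0 < m)
    (hx : x = m * q + r) (hr₀ : 0 ≤ r) (hr : r < m) : ⌊x / m⌋ = q := by
  rw [Int.floor_eq_iff, hx, le_div_iff₀ hm, div_lt_iff₀ hm]
  constructor <;> linarith

theorem stmt_7 (m : ℤ) (hm : 0 < m) (hme : Even m) (k n : ℤ)
    (hk : Int.ModEq m k (m / 2)) (hn : Int.ModEq m (n + 1) (m / 2)) :
    ⌊(n : ℚ) / (m : ℚ)⌋ + ⌊((n : ℚ) - (k : ℚ) + 1) / (m : ℚ)⌋ =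
      ⌊(4 * (n : ℚ) + 2 * (k : ℚ) + 2) / (m : ℚ)⌋ - ⌊(2 * (n : ℚ) + (k : ℚ) + 1) / (m : ℚ)⌋ +
        2 * ⌊(k : ℚ) / (m : ℚ)⌋ - 2 * ⌊(2 * (k : ℚ)) / (m : ℚ)⌋ + 1 := by
  obtain ⟨t, rfl⟩ := hme
  have ht : (1 : ℚ) ≤ t := by exact_mod_cast (by omega : 1 ≤ t)
  rw [show (t + t) / 2 = t by omega] at hk hn
  obtain ⟨a, rfl⟩ := Int.modEq_iff_add_fac.mp hk.symm
  obtain ⟨b, hb⟩ := Int.modEq_iff_add_fac.mp hn.symm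
  obtain rfl : n = t - 1 + (t + t) * b := by linarith
  have hmq : (0 : ℚ) < ((t + t : ℤ) : ℚ) := by push_cast; linarith
  rw [Int.floor_div_eq_of_eq_mul_add (q := b) (r := (t : ℚ) - 1) hmq (by push_cast; ring)
      (by linarith) (by push_cast; linarith),
    Int.floor_div_eq_of_eq_mul_add (q := b - a) (r := (0 : ℚ)) hmq (by push_cast; ring) le_rfl hmq,
    Int.floor_div_eq_of_eq_mul_add (q := 4 * b + 2 * a + 2) (r := 2 * (t : ℚ) - 2) hmq
      (by push_cast; ring) (by linarith) (by push_cast; linarith),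
    Int.floor_div_eq_of_eq_mul_add (q := 2 * b + a + 1) (r := (t : ℚ) - 1) hmq (by push_cast; ring)
      (by linarith) (by push_cast; linarith),
    Int.floor_div_eq_of_eq_mul_add (q := a) (r := (t : ℚ)) hmq (by push_cast; ring) (by linarith)
      (by push_cast; linarith),
    Int.floor_div_eq_of_eq_mul_add (q := 2 * a + 1) (r := (0 : ℚ)) hmq (by push_cast; ring) le_rfl
      hmq]
  ring
end

section
/- Let m be a positive integer and let k, n be integers. If it is not the case that m is even with k ≡ m/2 (mod m) and n+1 ≡ m/2 (mod m), then ⌊(2n+2k)/m⌋ − ⌊(n+k)/m⌋ + 2⌊k/m⌋ − 2⌊2k/m⌋ ≥ 2⌊n/m⌋ − ⌊(2n+1)/m⌋ + ⌊(n−k+1)/m⌋. -/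
/-! Each floor is an integer quotient by `m`, and the difference of the two sides is unchanged
when `k` or `n` is shifted by a multiple of `m`, so it suffices to take `0 ≤ k, n < m`. There
every quotient takes one of at most four values, each decided by a linear comparison with `m`,
and the inequality is checked case by case; among residues it fails only for `2k = m = 2n + 2`. -/

theorem Int.floor_intCast_div_intCast {K : Type*} [Field K] [LinearOrder K] [IsStrictOrderedRing K]
    [FloorRing K] (x : ℤ) {m : ℤ} (hm : 0 ≤ m) : ⌊(x : K) / m⌋ = x / m := by
  rw [Int.floor_div_cast_of_nonneg hm, Int.floor_intCast]

theorem Int.ediv_bounds_of_mul_le_of_lt_mul {m : ℤ} (hm : 0 < m) (x lo hi : ℤ)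
    (hlo : m * lo ≤ x) (hhi : x < m * hi) :
    lo ≤ x / m ∧ x / m < hi ∧ m * (x / m) ≤ x ∧ x < m * (x / m) + m :=
  ⟨(Int.le_ediv_iff_mul_le hm).2 (by linarith), (Int.ediv_lt_iff_lt_mul hm).2 (by linarith),
    Int.mul_ediv_self_le hm.ne', by linarith [Int.lt_mul_ediv_self_add (x := x) hm]⟩

theorem Int.add_modEq_half_of_two_mul_emod_add_eq {m x c : ℤ} (h : 2 * (x % m + c) = m) :
    x + c ≡ m / 2 [ZMOD m] := by
  rw [show m / 2 = x % m + c by omega]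
  exact ((Int.mod_modEq x m).add_right c).symm

def defect (m k n : ℤ) : ℤ :=
  (2 * n + 2 * k) / m - (n + k) / m + 2 * (k / m) - 2 * (2 * k / m) -
    (2 * (n / m) - (2 * n + 1) / m + (n - k + 1) / m)

theorem defect_add_mul {m : ℤ} (hm : m ≠ 0) (k n c d : ℤ) :
    defect m (k + m * c) (n + m * d) = defect m k n := by
  simp only [defect]
  rw [show 2 * (n + m * d) + 2 * (k + m * c) = 2 * n + 2 * k + m * (2 * d + 2 * c) by ring,
    show n + m * d + (k + m * c) = n + k + m * (d + c) by ring,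
    show 2 * (k + m * c) = 2 * k + m * (2 * c) by ring,
    show 2 * (n + m * d) + 1 = 2 * n + 1 + m * (2 * d) by ring,
    show n + m * d - (k + m * c) + 1 = n - k + 1 + m * (d - c) by ring]
  simp only [Int.add_mul_ediv_left _ _ hm]
  ring

theorem defect_nonneg_of_mem_Ico {m a b : ℤ} (hm : 0 < m) (ha : 0 ≤ a ∧ a < m)
    (hb : 0 ≤ b ∧ b < m) (hab : ¬ (2 * a = m ∧ 2 * b + 2 = m)) : 0 ≤ defect m a b := by
  have hk : a / m = 0 := Int.ediv_eq_zero_of_lt ha.1 ha.2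
  have hn : b / m = 0 := Int.ediv_eq_zero_of_lt hb.1 hb.2
  simp only [defect, hk, hn]
  obtain ⟨_, _, _, _⟩ := Int.ediv_bounds_of_mul_le_of_lt_mul hm (2 * b + 2 * a) 0 4
    (by omega) (by omega)
  obtain ⟨_, _, _, _⟩ := Int.ediv_bounds_of_mul_le_of_lt_mul hm (b + a) 0 2
    (by omega) (by omega)
  obtain ⟨_, _, _, _⟩ := Int.ediv_bounds_of_mul_le_of_lt_mul hm (2 * a) 0 2
    (by omega) (by omega)
  obtain ⟨_, _, _, _⟩ := Int.ediv_bounds_of_mul_le_of_lt_mul hm (2 * b + 1) 0 2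
    (by omega) (by omega)
  obtain ⟨_, _, _, _⟩ := Int.ediv_bounds_of_mul_le_of_lt_mul hm (b - a + 1) (-1) 2
    (by omega) (by omega)
  generalize (2 * b + 2 * a) / m = q1 at *
  generalize (b + a) / m = q2 at *
  generalize 2 * a / m = q3 at *
  generalize (2 * b + 1) / m = q4 at *
  generalize (b - a + 1) / m = q5 at *
  interval_cases q1 <;> interval_cases q2 <;> interval_cases q3 <;> interval_cases q4 <;>
    interval_cases q5 <;> omega

theorem defect_nonneg {m : ℤ} (hm : 0 < m) (k n : ℤ)
    (h : ¬ (2 * (k % m) = m ∧ 2 * (n % m) + 2 = m)) : 0 ≤ defect m k n := by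
  rw [← Int.emod_add_mul_ediv k m, ← Int.emod_add_mul_ediv n m, defect_add_mul hm.ne']
  exact defect_nonneg_of_mem_Ico hm ⟨Int.emod_nonneg k hm.ne', Int.emod_lt_of_pos k hm⟩
    ⟨Int.emod_nonneg n hm.ne', Int.emod_lt_of_pos n hm⟩ h

theorem stmt_8 (m : ℤ) (hm : 0 < m) (k n : ℤ)
    (h : ¬ (Even m ∧ Int.ModEq m k (m / 2) ∧ Int.ModEq m (n + 1) (m / 2))) :
    ⌊(2 * (n : ℚ) + 2 * (k : ℚ)) / (m : ℚ)⌋ - ⌊((n : ℚ) + (k : ℚ)) / (m : ℚ)⌋ +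
        2 * ⌊(k : ℚ) / (m : ℚ)⌋ - 2 * ⌊(2 * (k : ℚ)) / (m : ℚ)⌋ ≥
      2 * ⌊(n : ℚ) / (m : ℚ)⌋ - ⌊(2 * (n : ℚ) + 1) / (m : ℚ)⌋ +
        ⌊((n : ℚ) - (k : ℚ) + 1) / (m : ℚ)⌋ := by
  have hres : ¬ (2 * (k % m) = m ∧ 2 * (n % m) + 2 = m) := fun ⟨hk, hn⟩ =>
    h ⟨⟨k % m, by omega⟩,
      by simpa using Int.add_modEq_half_of_two_mul_emod_add_eq (c := 0) (by simpa using hk),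
      Int.add_modEq_half_of_two_mul_emod_add_eq (by omega)⟩
  have key := defect_nonneg hm k n hres
  simp only [defect, ← Int.floor_intCast_div_intCast (K := ℚ) _ hm.le] at key
  push_cast at key
  linarith
end

section
/- For every positive integer n, the number (2n+1)·binom(2n,n) divides binom(6n,3n)·binom(3n,n); equivalently, the rational number n!·(6n)! / ((2n)!·(2n+1)!·(3n)!) is an integer. -/
/-!
By Legendre's formula, `(2n)! (2n+1)! (3n)!` divides `n! (6n)!` as soon as
`⌊2n/q⌋ + ⌊(2n+1)/q⌋ + ⌊3n/q⌋ ≤ ⌊n/q⌋ + ⌊6n/q⌋` for every prime power `q`, and in fact this holds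
for every `q ≥ 2`. Both sides change by `7 ⌊n/q⌋` when `n` is replaced by `n mod q`, so it suffices
to take `n < q`, where a case split on the three quotients on the left (each at most `2`) settles
it. The binomial divisibility is the same statement after clearing the factorials.
-/
open Nat Finset

theorem Nat.prod_factorial_dvd_prod_factorial {ι κ : Type*} (s : Finset ι) (t : Finset κ)
    (a : ι → ℕ) (b : κ → ℕ) (h : ∀ q, 2 ≤ q → ∑ i ∈ s, a i / q ≤ ∑ j ∈ t, b j / q) :
    ∏ i ∈ s, (a i)! ∣ ∏ j ∈ t, (b j)! := by
  rw [← Nat.factorization_le_iff_dvd (by positivity) (by positivity)]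
  intro p
  by_cases hp : p.Prime
  · set N := ∑ i ∈ s, a i + ∑ j ∈ t, b j
    have hlog {m : ℕ} (hm : m ≤ N) : Nat.log p m < N + 1 :=
      Nat.lt_succ_of_le ((Nat.log_le_self p m).trans hm)
    rw [Nat.factorization_prod (fun _ _ => factorial_ne_zero _),
      Nat.factorization_prod (fun _ _ => factorial_ne_zero _)]
    simp only [Finsupp.coe_finsetSum, Finset.sum_apply]
    rw [sum_congr rfl fun i hi => factorization_factorial hp
        (hlog ((single_le_sum (fun _ _ => Nat.zero_le _) hi).trans (Nat.le_add_right _ _))),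
      sum_congr rfl fun j hj => factorization_factorial hp
        (hlog ((single_le_sum (fun _ _ => Nat.zero_le _) hj).trans (Nat.le_add_left _ _))),
      sum_comm, sum_comm (s := t)]
    refine sum_le_sum fun i hi => h _ ?_
    exact hp.two_le.trans (Nat.le_self_pow (by simp at hi; omega) p)
  · simp [Nat.factorization_eq_zero_of_not_prime _ hp]

theorem Nat.mul_add_div_eq_mul_mod_add_div {q : ℕ} (hq : 0 < q) (k n j : ℕ) :
    (k * n + j) / q = (k * (n % q) + j) / q + k * (n / q) := by
  conv_lhs => rw [← Nat.mod_add_div n q]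
  rw [show k * (n % q + q * (n / q)) + j = k * (n % q) + j + k * (n / q) * q by ring,
    Nat.add_mul_div_right _ _ hq]

theorem div_add_div_add_div_le_of_lt {q r : ℕ} (hq : 2 ≤ q) (hr : r < q) :
    2 * r / q + (2 * r + 1) / q + 3 * r / q ≤ 6 * r / q := by
  have hq0 : 0 < q := by omega
  have ha := Nat.div_mul_le_self (2 * r) q
  have ha' := Nat.lt_mul_div_succ (2 * r) hq0
  have hb := Nat.div_mul_le_self (2 * r + 1) q
  have hb' := Nat.lt_mul_div_succ (2 * r + 1) hq0
  have hc := Nat.div_mul_le_self (3 * r) q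
  have hc' := Nat.lt_mul_div_succ (3 * r) hq0
  have ha1 : 2 * r / q ≤ 1 := Nat.le_of_lt_succ (Nat.div_lt_of_lt_mul (by omega))
  have hb1 : (2 * r + 1) / q ≤ 1 := Nat.le_of_lt_succ (Nat.div_lt_of_lt_mul (by omega))
  have hc2 : 3 * r / q ≤ 2 := Nat.le_of_lt_succ (Nat.div_lt_of_lt_mul (by omega))
  rw [Nat.le_div_iff_mul_le hq0]
  generalize 2 * r / q = a at *
  generalize (2 * r + 1) / q = b at *
  generalize 3 * r / q = c at *
  interval_cases a <;> interval_cases b <;> interval_cases c <;> omega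

theorem div_add_div_add_div_le {q : ℕ} (hq : 2 ≤ q) (n : ℕ) :
    2 * n / q + (2 * n + 1) / q + 3 * n / q ≤ n / q + 6 * n / q := by
  have hq0 : 0 < q := by omega
  have hmod := div_add_div_add_div_le_of_lt hq (Nat.mod_lt n hq0)
  have e := Nat.mul_add_div_eq_mul_mod_add_div hq0
  have e1 := e 1 n 0
  have e2 := e 2 n 0
  have e2' := e 2 n 1
  have e3 := e 3 n 0
  have e6 := e 6 n 0
  simp only [add_zero, one_mul, Nat.div_eq_of_lt (Nat.mod_lt n hq0)] at *
  omega

theorem factorial_mul_factorial_mul_factorial_dvd (n : ℕ) :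
    (2 * n)! * (2 * n + 1)! * (3 * n)! ∣ n ! * (6 * n)! := by
  have h := Nat.prod_factorial_dvd_prod_factorial univ univ ![2 * n, 2 * n + 1, 3 * n] ![n, 6 * n]
    fun q hq => by simpa [Fin.sum_univ_three] using div_add_div_add_div_le hq n
  simpa [Fin.prod_univ_three, mul_assoc] using h

theorem stmt_10_general (n : ℕ) :
    (2 * n + 1) * Nat.choose (2 * n) n ∣
      Nat.choose (6 * n) (3 * n) * Nat.choose (3 * n) n ∧
    ∃ z : ℤ,
      ((Nat.factorial n : ℚ) * (Nat.factorial (6 * n) : ℚ)) /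
        ((Nat.factorial (2 * n) : ℚ) * (Nat.factorial (2 * n + 1) : ℚ) *
          (Nat.factorial (3 * n) : ℚ)) = (z : ℚ) := by
  have hdvd := factorial_mul_factorial_mul_factorial_dvd n
  have c2 : (2 * n).choose n * n ! * n ! = (2 * n)! := by
    simpa [two_mul] using add_choose_mul_factorial_mul_factorial n n
  have c3 : (3 * n).choose n * (2 * n)! * n ! = (3 * n)! := by
    simpa [show 2 * n + n = 3 * n by ring] using add_choose_mul_factorial_mul_factorial (2 * n) n
  have c6 : (6 * n).choose (3 * n) * (3 * n)! * (3 * n)! = (6 * n)! := by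
    simpa [show 3 * n + 3 * n = 6 * n by ring] using
      add_choose_mul_factorial_mul_factorial (3 * n) (3 * n)
  constructor
  · rw [← Nat.mul_dvd_mul_iff_right (by positivity : 0 < n ! * n ! * (2 * n)! * (3 * n)!)]
    convert hdvd using 1
    · rw [factorial_succ, ← c2]; ring
    · rw [← c6, ← c3]; ring
  · obtain ⟨k, hk⟩ := hdvd
    refine ⟨k, ?_⟩
    rw [div_eq_iff (by positivity)]
    exact_mod_cast hk.trans (mul_comm _ _)

theorem stmt_10 (n : ℕ) (hn : 0 < n) :
    (2 * n + 1) * Nat.choose (2 * n) n ∣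
      Nat.choose (6 * n) (3 * n) * Nat.choose (3 * n) n ∧
    ∃ z : ℤ,
      ((Nat.factorial n : ℚ) * (Nat.factorial (6 * n) : ℚ)) /
        ((Nat.factorial (2 * n) : ℚ) * (Nat.factorial (2 * n + 1) : ℚ) *
          (Nat.factorial (3 * n) : ℚ)) = (z : ℚ) :=
  stmt_10_general n
end

section
/- For every odd prime p, one has S_p ≡ 15 − 30p + 60p^2 (mod p^3), where S_p is the integer binom(6p,3p)·binom(3p,p) / (2(2p+1)·binom(2p,p)). -/
/-! For a prime `p ≥ 5` one has `C(a p, p) ≡ a (mod p³)`: write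
`∏_{0<i<p} (m p + i) = (p-1)! ∏_{0<i<p} (1 + m p / i)` and expand to second order. The
first-order term `p H` vanishes modulo `p³` by pairing `i` with `p - i`, and the second-order
term `p² ∑ i⁻²` vanishes because `∑ x⁻² = ∑ x² = 0` in `𝔽_p`. The multinomial identity
`C(6p,3p) C(3p,p) C(2p,p) = C(6p,p) C(5p,p) C(4p,p)` then gives `C(6p,3p) ≡ 20`, hence
`4 (2p+1) S ≡ 60` and `S ≡ 15 (1 - 2p + 4p²)`. The case `p = 3` is a direct computation. -/

open Finset Nat

section CubeZero

variable {R : Type*} [CommRing R] {e : R}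

theorem two_mul_prod_one_add_mul_of_pow_three_eq_zero {ι : Type*} (he : e ^ 3 = 0)
    (s : Finset ι) (y : ι → R) :
    2 * ∏ i ∈ s, (1 + e * y i) =
      2 + 2 * e * ∑ i ∈ s, y i + e ^ 2 * ((∑ i ∈ s, y i) ^ 2 - ∑ i ∈ s, y i ^ 2) := by
  induction s using Finset.cons_induction with
  | empty => simp
  | cons a s ha ih =>
    rw [prod_cons, sum_cons, sum_cons]
    linear_combination (1 + e * y a) * ih +
      (y a * ((∑ i ∈ s, y i) ^ 2 - ∑ i ∈ s, y i ^ 2)) * he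

/-- Pairing `i` with `n - 1 - i` gives `2 H = e G` and `G + H₂ = e K`, where
`G = ∑ b i b (n-1-i)` and `K = ∑ b i² b (n-1-i)`; hence `2 e H = e³ K - e² H₂`. -/
theorem mul_sum_range_eq_zero_of_add_reflect_eq (he : e ^ 3 = 0) (h2 : IsUnit (2 : R))
    {n : ℕ} {a b : ℕ → R} (hab : ∀ i < n, a i * b i = 1)
    (hsum : ∀ i < n, a i + a (n - 1 - i) = e) (hsq : e ^ 2 * ∑ i ∈ range n, b i ^ 2 = 0) :
    e * ∑ i ∈ range n, b i = 0 := by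
  have hH : 2 * ∑ i ∈ range n, b i = e * ∑ i ∈ range n, b i * b (n - 1 - i) := by
    rw [two_mul]
    nth_rewrite 2 [← sum_range_reflect]
    rw [← sum_add_distrib, mul_sum]
    refine sum_congr rfl fun i hi => ?_
    have hi := mem_range.1 hi
    linear_combination (-b (n - 1 - i)) * hab i hi + (-b i) * hab (n - 1 - i) (by omega) +
      (b i * b (n - 1 - i)) * hsum i hi
  have hG : ∑ i ∈ range n, b i * b (n - 1 - i) + ∑ i ∈ range n, b i ^ 2 =
      e * ∑ i ∈ range n, b i ^ 2 * b (n - 1 - i) := by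
    rw [← sum_add_distrib, mul_sum]
    refine sum_congr rfl fun i hi => ?_
    have hi := mem_range.1 hi
    linear_combination (-(b i * b (n - 1 - i))) * hab i hi +
      (-b i ^ 2) * hab (n - 1 - i) (by omega) +
      (b i ^ 2 * b (n - 1 - i)) * hsum i hi
  refine h2.mul_left_cancel ?_
  linear_combination e * hH + e ^ 2 * hG - hsq + (∑ i ∈ range n, b i ^ 2 * b (n - 1 - i)) * he

end CubeZero

theorem choose_mul_choose_mul_choose {n k : ℕ} (h : 3 * k ≤ n) :
    n.choose (3 * k) * (3 * k).choose k * (2 * k).choose k =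
      n.choose k * (n - k).choose k * (n - 2 * k).choose k := by
  rw [Nat.choose_mul (by omega : k ≤ 3 * k), mul_assoc, show 3 * k - k = 2 * k by omega,
    Nat.choose_mul (by omega : k ≤ 2 * k), show 2 * k - k = k by omega,
    show n - k - k = n - 2 * k by omega, mul_assoc]

theorem succ_mul_choose_mul_factorial_pred (m p : ℕ) (hp : 0 < p) :
    ((m + 1) * p).choose p * (p - 1)! = (m + 1) * ∏ i ∈ range (p - 1), (m * p + i + 1) := by
  obtain ⟨q, rfl⟩ : ∃ q, p = q + 1 := ⟨p - 1, by omega⟩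
  have h := ascFactorial_eq_factorial_mul_choose (m * (q + 1)) (q + 1)
  rw [ascFactorial_eq_prod_range, prod_range_succ, factorial_succ] at h
  have hprod : ∏ i ∈ range q, (m * (q + 1) + 1 + i) = ∏ i ∈ range q, (m * (q + 1) + i + 1) :=
    prod_congr rfl fun _ _ => by ring
  rw [hprod, show m * (q + 1) + (q + 1) = (m + 1) * (q + 1) by ring] at h
  refine Nat.eq_of_mul_eq_mul_left (succ_pos q) ?_
  rw [Nat.add_sub_cancel]
  calc (q + 1) * (((m + 1) * (q + 1)).choose (q + 1) * q !)
      = (q + 1) * q ! * ((m + 1) * (q + 1)).choose (q + 1) := by ring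
    _ = (∏ i ∈ range q, (m * (q + 1) + i + 1)) * (m * (q + 1) + 1 + q) := h.symm
    _ = (q + 1) * ((m + 1) * ∏ i ∈ range q, (m * (q + 1) + i + 1)) := by ring

theorem natCast_pow_eq_zero (n k : ℕ) : (n : ZMod (n ^ k)) ^ k = 0 := by
  rw [← Nat.cast_pow, ZMod.natCast_self]

section PrimeCube

variable {p : ℕ} [hp : Fact p.Prime]

theorem isUnit_natCast_of_not_dvd {n : ℕ} (k : ℕ) (h : ¬ p ∣ n) : IsUnit (n : ZMod (p ^ k)) :=
  (ZMod.isUnit_iff_coprime n _).2 (((hp.out.coprime_iff_not_dvd).2 h).symm.pow_right k)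

theorem isUnit_natCast_of_pos_of_lt {n : ℕ} (k : ℕ) (h0 : 0 < n) (hn : n < p) :
    IsUnit (n : ZMod (p ^ k)) :=
  isUnit_natCast_of_not_dvd k (Nat.not_dvd_of_pos_of_lt h0 hn)

theorem isUnit_natCast_add_one {i : ℕ} (k : ℕ) (hi : i + 1 < p) :
    IsUnit ((i : ZMod (p ^ k)) + 1) := by
  exact_mod_cast isUnit_natCast_of_pos_of_lt k (succ_pos i) hi

theorem natCast_sq_mul_eq_zero_of_castHom_eq_zero {x : ZMod (p ^ 3)}
    (hx : ZMod.castHom (dvd_pow_self p three_ne_zero) (ZMod p) x = 0) :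
    (p : ZMod (p ^ 3)) ^ 2 * x = 0 := by
  have : NeZero p := ⟨hp.out.ne_zero⟩
  rw [← ZMod.natCast_zmod_val x] at hx ⊢
  rw [map_natCast, ZMod.natCast_eq_zero_iff] at hx
  obtain ⟨c, hc⟩ := hx
  rw [hc, Nat.cast_mul]
  linear_combination (c : ZMod (p ^ 3)) * natCast_pow_eq_zero p 3

theorem sum_range_natCast_eq_sum_univ {M : Type*} [AddCommMonoid M] (n : ℕ) [NeZero n]
    (f : ZMod n → M) : ∑ i ∈ range n, f i = ∑ x, f x :=
  sum_nbij' (fun i => i) ZMod.val (fun _ _ => mem_univ _) (fun x _ => mem_range.2 x.val_lt)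
    (fun _ hi => ZMod.val_cast_of_lt (mem_range.1 hi)) (fun x _ => ZMod.natCast_zmod_val x)
    (fun _ _ => rfl)

theorem sum_range_inv_add_one_sq_eq_zero (hp5 : 5 ≤ p) :
    ∑ i ∈ range (p - 1), ((i : ZMod p) + 1)⁻¹ ^ 2 = 0 := by
  have : NeZero p := ⟨hp.out.ne_zero⟩
  have h := sum_range_succ' (fun i => ((i : ZMod p))⁻¹ ^ 2) (p - 1)
  rw [Nat.sub_add_cancel hp.out.one_le, sum_range_natCast_eq_sum_univ p (fun x => x⁻¹ ^ 2),
    Fintype.sum_bijective _ inv_involutive.bijective _ (fun x => x ^ 2) (fun x => rfl),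
    FiniteField.sum_pow_lt_card_sub_one (K := ZMod p) 2 (by rw [ZMod.card]; omega)] at h
  simpa using h.symm

theorem natCast_sq_mul_sum_range_inv_add_one_sq_eq_zero (hp5 : 5 ≤ p) :
    (p : ZMod (p ^ 3)) ^ 2 * ∑ i ∈ range (p - 1), ((i : ZMod (p ^ 3)) + 1)⁻¹ ^ 2 = 0 := by
  refine natCast_sq_mul_eq_zero_of_castHom_eq_zero ?_
  rw [map_sum, ← sum_range_inv_add_one_sq_eq_zero hp5]
  refine sum_congr rfl fun i hi => ?_
  have hunit := isUnit_natCast_add_one 3 (by have := mem_range.1 hi; omega : i + 1 < p)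
  rw [map_pow]
  congr 1
  refine eq_inv_of_mul_eq_one_left ?_
  rw [← map_natCast (ZMod.castHom (dvd_pow_self p three_ne_zero) (ZMod p)), ← map_one
    (ZMod.castHom (dvd_pow_self p three_ne_zero) (ZMod p)), ← map_add, ← map_mul,
    ZMod.inv_mul_of_unit _ hunit]

theorem natCast_mul_sum_range_inv_add_one_eq_zero (hp5 : 5 ≤ p) :
    (p : ZMod (p ^ 3)) * ∑ i ∈ range (p - 1), ((i : ZMod (p ^ 3)) + 1)⁻¹ = 0 := by
  refine mul_sum_range_eq_zero_of_add_reflect_eq (natCast_pow_eq_zero p 3)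
    (by exact_mod_cast isUnit_natCast_of_pos_of_lt 3 two_pos (by omega))
    (fun i hi => ZMod.mul_inv_of_unit _ (isUnit_natCast_add_one 3 (by omega)))
    (fun i hi => ?_) (natCast_sq_mul_sum_range_inv_add_one_sq_eq_zero hp5)
  exact_mod_cast congrArg (Nat.cast (R := ZMod (p ^ 3)))
    (by omega : i + 1 + (p - 1 - 1 - i + 1) = p)

theorem prod_range_mul_add_add_one_eq_factorial (hp5 : 5 ≤ p) (m : ℕ) :
    ∏ i ∈ range (p - 1), ((m * p + i + 1 : ℕ) : ZMod (p ^ 3)) = ((p - 1)! : ℕ) := by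
  set e : ZMod (p ^ 3) := (p : ZMod (p ^ 3))
  set b : ℕ → ZMod (p ^ 3) := fun i => ((i : ZMod (p ^ 3)) + 1)⁻¹
  have hfactor : ∀ i ∈ range (p - 1),
      ((m * p + i + 1 : ℕ) : ZMod (p ^ 3)) = ((i : ZMod (p ^ 3)) + 1) * (1 + e * (m * b i)) := by
    intro i hi
    have h := ZMod.mul_inv_of_unit _
      (isUnit_natCast_add_one 3 (by have := mem_range.1 hi; omega : i + 1 < p))
    push_cast
    linear_combination (-(e * m)) * h
  have hexp := two_mul_prod_one_add_mul_of_pow_three_eq_zero (natCast_pow_eq_zero p 3)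
    (range (p - 1)) (fun i => m * b i)
  simp only [← mul_sum, mul_pow] at hexp
  have hH := natCast_mul_sum_range_inv_add_one_eq_zero hp5
  have hH2 := natCast_sq_mul_sum_range_inv_add_one_sq_eq_zero hp5
  have hone : ∏ i ∈ range (p - 1), (1 + e * (m * b i)) = 1 := by
    refine (isUnit_natCast_of_pos_of_lt (p := p) 3 two_pos (by omega)).mul_left_cancel ?_
    push_cast
    linear_combination hexp + (2 * m + m ^ 2 * e * ∑ i ∈ range (p - 1), b i) * hH - m ^ 2 * hH2
  rw [prod_congr rfl hfactor, prod_mul_distrib, hone, mul_one]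
  exact_mod_cast congrArg (Nat.cast (R := ZMod (p ^ 3))) (prod_range_add_one_eq_factorial (p - 1))

theorem natCast_choose_mul_self (hp5 : 5 ≤ p) (a : ℕ) :
    ((a * p).choose p : ZMod (p ^ 3)) = a := by
  obtain _ | m := a
  · simp [Nat.choose_eq_zero_of_lt hp.out.pos]
  have hnat := congrArg (Nat.cast (R := ZMod (p ^ 3)))
    (succ_mul_choose_mul_factorial_pred m p hp.out.pos)
  rw [Nat.cast_mul, Nat.cast_mul, Nat.cast_prod,
    prod_range_mul_add_add_one_eq_factorial hp5] at hnat
  have hfact : IsUnit (((p - 1)! : ℕ) : ZMod (p ^ 3)) :=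
    isUnit_natCast_of_not_dvd 3 fun h => by rw [hp.out.dvd_factorial] at h; omega
  exact hfact.mul_right_cancel hnat

theorem natCast_choose_six_mul_three_mul (hp5 : 5 ≤ p) :
    ((6 * p).choose (3 * p) : ZMod (p ^ 3)) = 20 := by
  have h := congrArg (Nat.cast (R := ZMod (p ^ 3)))
    (choose_mul_choose_mul_choose (by omega : 3 * p ≤ 6 * p))
  rw [show 6 * p - p = 5 * p by omega, show 6 * p - 2 * p = 4 * p by omega] at h
  push_cast [natCast_choose_mul_self hp5] at h
  refine ((isUnit_natCast_of_pos_of_lt 3 two_pos (by omega)).mul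
    (isUnit_natCast_of_pos_of_lt 3 three_pos (by omega))).mul_left_cancel ?_
  push_cast
  linear_combination h

end PrimeCube

theorem stmt_12 (p : ℕ) (hp : p.Prime) (hodd : Odd p) (S : ℕ)
    (hS : 2 * (2 * p + 1) * Nat.choose (2 * p) p * S =
      Nat.choose (6 * p) (3 * p) * Nat.choose (3 * p) p) :
    Int.ModEq ((p : ℤ) ^ 3) (S : ℤ) (15 - 30 * (p : ℤ) + 60 * (p : ℤ) ^ 2) := by
  have : Fact p.Prime := ⟨hp⟩
  obtain rfl | hp5 : p = 3 ∨ 5 ≤ p := by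
    have := hp.two_le
    rcases hodd with ⟨k, rfl⟩
    omega
  · obtain rfl : S = 14586 := by
      simp [Nat.choose_eq_descFactorial_div_factorial, Nat.descFactorial, Nat.factorial] at hS
      omega
    decide
  have hlin : ((2 * p + 1) * S : ZMod (p ^ 3)) = 15 := by
    have h := congrArg (Nat.cast (R := ZMod (p ^ 3))) hS
    push_cast [natCast_choose_mul_self hp5, natCast_choose_six_mul_three_mul hp5] at h
    refine (isUnit_natCast_of_pos_of_lt 3 (by norm_num : 0 < 4) (by omega)).mul_left_cancel ?_
    push_cast
    linear_combination h
  have hS_mod : ((S : ℤ) : ZMod (p ^ 3)) = ((15 - 30 * p + 60 * p ^ 2 : ℤ) : ZMod (p ^ 3)) := by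
    push_cast
    -- `1 - 2p + 4p²` inverts `2p + 1` modulo `p³`
    linear_combination (1 - 2 * (p : ZMod (p ^ 3)) + 4 * p ^ 2) * hlin -
      8 * S * natCast_pow_eq_zero p 3
  exact_mod_cast (ZMod.intCast_eq_intCast_iff _ _ _).1 hS_mod
end

section
/- For every positive integer N, the following identity holds in the rationals: ∑_{n=0}^{N} (4n+1)·binom(2n,n)^3·(−64)^{N−n} − (4N+1)·(−4)^N·binom(2N,N)·binom(4N,2N) = 2(2N+1)^2·binom(2N,N)^2 · ∑_{k=1}^{N} (−4)^{k−1} · C_{N+k}·binom(N+k+1,2k) / binom(2k,k). -/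
/-!
Write `F(M, k)` for the `k`-th term of the right-hand side, prefactor included. Its term
`k = N + 1` is the subtracted term `(4N+1)(-4)^N binom(2N,N) binom(4N,2N)`, so the identity says
that `∑_{k=1}^{N+1} F(N, k)` equals the left-hand sum `S(N)`, i.e. that it satisfies the same
recurrence `S(N+1) = -64 S(N) + (4N+5) binom(2N+2,N+1)^3`. This is a Wilf–Zeilberger argument:
`F` is hypergeometric in both variables, and with the certificate
`G(M, k) = (4M+1)(2k-1)^2 / ((2M+1)^2 (2M+2k-1)) F(M, k)` one checks the rational identity
`F(M+1, k) + 64 F(M, k) = G(M+1, k) - G(M+1, k+1)` for `1 ≤ k ≤ M + 1`. Summing over `k`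
telescopes to `G(M+1, 1) - G(M+1, M+2)`, where `G(M, M+1) = F(M, M+1)` and
`G(M, 1) = (4M+1) binom(2M,M)^3`.
-/

open Finset Nat

section Casts

variable {K : Type*} [Field K] [CharZero K]

theorem cast_catalan_eq_centralBinom_div (m : ℕ) :
    (catalan m : K) = m.centralBinom / (m + 1) := by
  rw [eq_div_iff (Nat.cast_add_one_ne_zero m), ← succ_mul_catalan_eq_centralBinom]
  push_cast
  ring

theorem cast_centralBinom_succ (n : ℕ) :
    ((n + 1).centralBinom : K) = 2 * (2 * n + 1) * n.centralBinom / (n + 1) := by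
  rw [eq_div_iff (Nat.cast_add_one_ne_zero n), mul_comm]
  exact_mod_cast succ_mul_centralBinom_succ n

theorem cast_choose_succ_succ (n k : ℕ) :
    ((n + 1).choose (k + 1) : K) = (n + 1) * n.choose k / (k + 1) := by
  rw [eq_div_iff (Nat.cast_add_one_ne_zero k)]
  exact_mod_cast (add_one_mul_choose_eq n k).symm

theorem cast_choose_succ_right (n k : ℕ) :
    (n.choose (k + 1) : K) = n.choose k * ((n - k : ℕ) : K) / (k + 1) := by
  rw [eq_div_iff (Nat.cast_add_one_ne_zero k)]
  exact_mod_cast choose_succ_right_eq n k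

theorem cast_choose_eq_choose_succ (n k : ℕ) :
    (n.choose k : K) = (n + 1).choose k * ((n + 1 - k : ℕ) : K) / (n + 1) := by
  rw [eq_div_iff (Nat.cast_add_one_ne_zero n)]
  exact_mod_cast choose_mul_succ_eq n k

end Casts

def sumTerm (M k : ℕ) : ℚ :=
  (-4 : ℚ) ^ (k - 1) * (catalan (M + k) : ℚ) *
    (Nat.choose (M + k + 1) (2 * k) : ℚ) / (Nat.choose (2 * k) k : ℚ)

theorem sumTerm_eq_centralBinom (M k : ℕ) :
    sumTerm M k = (-4 : ℚ) ^ (k - 1) * (M + k).centralBinom / (M + k + 1) *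
      (M + k + 1).choose (2 * k) / k.centralBinom := by
  rw [sumTerm, cast_catalan_eq_centralBinom_div]
  unfold centralBinom
  push_cast
  ring

theorem sumTerm_succ_left (M k : ℕ) :
    ((M + 2 - k : ℕ) : ℚ) * sumTerm (M + 1) k = 2 * (2 * M + 2 * k + 1) * sumTerm M k := by
  rw [sumTerm_eq_centralBinom, sumTerm_eq_centralBinom, show M + 1 + k = M + k + 1 by ring,
    cast_centralBinom_succ, cast_choose_eq_choose_succ (M + k + 1),
    show M + k + 1 + 1 - 2 * k = M + 2 - k by omega]
  have := centralBinom_ne_zero k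
  push_cast
  field_simp
  ring

theorem sumTerm_succ_right (M k : ℕ) (hk : k ≠ 0) :
    (2 * (k : ℚ) + 1) ^ 2 * sumTerm M (k + 1) =
      -2 * (2 * M + 2 * k + 1) * ((M + 1 - k : ℕ) : ℚ) * sumTerm M k := by
  obtain ⟨j, rfl⟩ := exists_eq_succ_of_ne_zero hk
  rw [sumTerm_eq_centralBinom, sumTerm_eq_centralBinom,
    show M + (j + 1 + 1) = M + j + 1 + 1 by ring, show 2 * (j + 1 + 1) = 2 * j + 2 + 1 + 1 by ring,
    cast_centralBinom_succ (M + j + 1), cast_centralBinom_succ (j + 1), cast_choose_succ_succ,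
    cast_choose_succ_right, show M + j + 1 + 1 - (2 * j + 2) = M + 1 - (j + 1) by omega,
    show M + (j + 1) = M + j + 1 by ring, show 2 * (j + 1) = 2 * j + 2 by ring,
    show j + 1 + 1 - 1 = (j + 1 - 1) + 1 by omega, pow_succ]
  have := centralBinom_ne_zero (j + 1)
  push_cast
  field_simp
  ring

def wzTerm (M k : ℕ) : ℚ := 2 * (2 * M + 1) ^ 2 * (M.centralBinom : ℚ) ^ 2 * sumTerm M k

theorem wzTerm_succ_left (M k : ℕ) :
    ((M : ℚ) + 1) ^ 2 * ((M + 2 - k : ℕ) : ℚ) * wzTerm (M + 1) k =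
      8 * (2 * M + 3) ^ 2 * (2 * M + 2 * k + 1) * wzTerm M k := by
  unfold wzTerm
  rw [cast_centralBinom_succ]
  push_cast
  field_simp
  linear_combination (4 * (2 * (M : ℚ) + 3) ^ 2 * (M.centralBinom : ℚ) ^ 2) * sumTerm_succ_left M k

theorem wzTerm_succ_right (M k : ℕ) (hk : k ≠ 0) :
    (2 * (k : ℚ) + 1) ^ 2 * wzTerm M (k + 1) =
      -2 * (2 * M + 2 * k + 1) * ((M + 1 - k : ℕ) : ℚ) * wzTerm M k := by
  unfold wzTerm
  linear_combination (2 * (2 * (M : ℚ) + 1) ^ 2 * (M.centralBinom : ℚ) ^ 2) *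
    sumTerm_succ_right M k hk

theorem wzTerm_one (M : ℕ) : wzTerm M 1 = (2 * (M : ℚ) + 1) ^ 3 * (M.centralBinom : ℚ) ^ 3 := by
  rw [wzTerm, sumTerm_eq_centralBinom, cast_centralBinom_succ, cast_choose_succ_succ,
    cast_choose_succ_succ]
  norm_num [centralBinom]
  field_simp

theorem wzTerm_succ_self (M : ℕ) :
    wzTerm M (M + 1) = (4 * (M : ℚ) + 1) * (-4) ^ M * M.centralBinom * (2 * M).centralBinom := by
  rw [wzTerm, sumTerm_eq_centralBinom, show M + (M + 1) = 2 * M + 1 by ring,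
    cast_centralBinom_succ, cast_centralBinom_succ, show 2 * (M + 1) = 2 * M + 1 + 1 by ring,
    choose_self]
  have := centralBinom_ne_zero M
  push_cast
  field_simp
  ring

def wzCert (M k : ℕ) : ℚ :=
  (4 * M + 1) * (2 * k - 1) ^ 2 / ((2 * M + 1) ^ 2 * (2 * M + 2 * k - 1)) * wzTerm M k

theorem wzCert_one (M : ℕ) : wzCert M 1 = (4 * M + 1) * (M.centralBinom : ℚ) ^ 3 := by
  rw [wzCert, wzTerm_one, Nat.cast_one, show 2 * (M : ℚ) + 2 * 1 - 1 = 2 * M + 1 by ring]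
  have : (2 * (M : ℚ) + 1) ≠ 0 := by positivity
  field_simp
  ring

theorem wzCert_succ_self (M : ℕ) : wzCert M (M + 1) = wzTerm M (M + 1) := by
  rw [wzCert, show 2 * (M : ℚ) + 2 * ((M + 1 : ℕ) : ℚ) - 1 = 4 * M + 1 by push_cast; ring]
  have : (4 * (M : ℚ) + 1) ≠ 0 := by positivity
  have : (2 * (M : ℚ) + 1) ≠ 0 := by positivity
  field_simp
  push_cast
  ring

theorem wzCert_sub_wzCert_succ (M k : ℕ) (hk₀ : 1 ≤ k) (hk : k ≤ M + 1) :
    wzCert (M + 1) k - wzCert (M + 1) (k + 1) = wzTerm (M + 1) k + 64 * wzTerm M k := by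
  have hM := wzTerm_succ_left M k
  have hk' := wzTerm_succ_right (M + 1) k (by omega)
  rw [show M + 1 + 1 - k = M + 2 - k by omega] at hk'
  rw [Nat.cast_sub (by omega)] at hM hk'
  push_cast at hM hk'
  have h₀ : wzTerm M k = ((M : ℚ) + 1) ^ 2 * (M + 2 - k) * wzTerm (M + 1) k /
      (8 * (2 * M + 3) ^ 2 * (2 * M + 2 * k + 1)) := by
    rw [eq_div_iff (by positivity)]
    linear_combination -hM
  have h₁ : wzTerm (M + 1) (k + 1) =
      -2 * (2 * M + 2 * k + 3) * (M + 2 - k) * wzTerm (M + 1) k / (2 * k + 1) ^ 2 := by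
    rw [eq_div_iff (by positivity)]
    linear_combination hk'
  rw [wzCert, wzCert, h₀, h₁]
  push_cast
  rw [show 2 * ((M : ℚ) + 1) + 2 * k - 1 = 2 * M + 2 * k + 1 by ring,
    show 2 * ((M : ℚ) + 1) + 2 * (k + 1) - 1 = 2 * M + 2 * k + 3 by ring]
  field_simp
  ring

theorem sum_range_succ_mul_pow_sub {R : Type*} [CommSemiring R] (a : ℕ → R) (x : R) (N : ℕ) :
    ∑ n ∈ range (N + 2), a n * x ^ (N + 1 - n) =
      x * ∑ n ∈ range (N + 1), a n * x ^ (N - n) + a (N + 1) := by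
  rw [sum_range_succ, mul_sum, Nat.sub_self, pow_zero, mul_one]
  congr 1
  refine sum_congr rfl fun n hn => ?_
  rw [show N + 1 - n = N - n + 1 by have := mem_range.mp hn; omega, pow_succ]
  ring

theorem sum_wzTerm (N : ℕ) :
    ∑ k ∈ Icc 1 (N + 1), wzTerm N k =
      ∑ n ∈ range (N + 1), (4 * (n : ℚ) + 1) * (n.centralBinom : ℚ) ^ 3 * (-64) ^ (N - n) := by
  induction N with
  | zero => simp [wzTerm_one]
  | succ N ih =>
    have htel : ∑ k ∈ Icc 1 (N + 1), (wzTerm (N + 1) k + 64 * wzTerm N k) =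
        wzCert (N + 1) 1 - wzCert (N + 1) (N + 2) := by
      rw [sum_congr rfl fun k hk =>
        (wzCert_sub_wzCert_succ N k (mem_Icc.mp hk).1 (mem_Icc.mp hk).2).symm]
      have := sum_Icc_sub (f := fun k => -wzCert (N + 1) k) (show 1 ≤ N + 1 by omega)
      simpa only [sub_neg_eq_add, neg_add_eq_sub] using this
    rw [sum_add_distrib, ← mul_sum, ih, wzCert_one, show N + 2 = N + 1 + 1 from rfl,
      wzCert_succ_self] at htel
    rw [sum_Icc_succ_top (by omega), sum_range_succ_mul_pow_sub]
    push_cast at htel ⊢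
    linear_combination htel

theorem stmt_13_general (N : ℕ) :
    (∑ n ∈ Finset.range (N + 1),
        (4 * (n : ℚ) + 1) * (Nat.choose (2 * n) n : ℚ) ^ 3 * (-64) ^ (N - n)) -
      (4 * (N : ℚ) + 1) * (-4) ^ N * (Nat.choose (2 * N) N : ℚ) *
        (Nat.choose (4 * N) (2 * N) : ℚ) =
    2 * (2 * (N : ℚ) + 1) ^ 2 * (Nat.choose (2 * N) N : ℚ) ^ 2 *
      ∑ k ∈ Finset.Icc 1 N,
        (-4 : ℚ) ^ (k - 1) * (catalan (N + k) : ℚ) *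
          (Nat.choose (N + k + 1) (2 * k) : ℚ) / (Nat.choose (2 * k) k : ℚ) := by
  have h := sum_wzTerm N
  rw [sum_Icc_succ_top (by omega), wzTerm_succ_self] at h
  simp only [centralBinom, show 2 * (2 * N) = 4 * N by ring] at h
  rw [← h, mul_sum, add_sub_cancel_right]
  rfl

theorem stmt_13 (N : ℕ) (hN : 0 < N) :
    (∑ n ∈ Finset.range (N + 1),
        (4 * (n : ℚ) + 1) * (Nat.choose (2 * n) n : ℚ) ^ 3 * (-64) ^ (N - n)) -
      (4 * (N : ℚ) + 1) * (-4) ^ N * (Nat.choose (2 * N) N : ℚ) *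
        (Nat.choose (4 * N) (2 * N) : ℚ) =
    2 * (2 * (N : ℚ) + 1) ^ 2 * (Nat.choose (2 * N) N : ℚ) ^ 2 *
      ∑ k ∈ Finset.Icc 1 N,
        (-4 : ℚ) ^ (k - 1) * (catalan (N + k) : ℚ) *
          (Nat.choose (N + k + 1) (2 * k) : ℚ) / (Nat.choose (2 * k) k : ℚ) :=
  stmt_13_general N
end

section
/- As n → ∞, S_n is asymptotically equivalent to 108^n / (8·n·√(nπ)); that is, the ratio S_n / (108^n/(8 n √(nπ))) tends to 1. -/
/-!
Writing the binomial coefficients as factorials, the real quotient of which `S_n` is the integer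
part equals `(6n)! n! / ((3n)! ((2n)!)² (4n + 2))`. Stirling's formula applied to each factorial
shows that `(6n)! n! / ((3n)! ((2n)!)²) ~ 108ⁿ / (2√(nπ))`: the powers `(m / e)^m` combine to
`(6⁶ / (3³ 2⁴))ⁿ = 108ⁿ` and the square-root factors to `1 / (2√(nπ))`. Dividing by `4n + 2 ~ 4n`
gives `108ⁿ / (8n√(nπ))`, which grows exponentially, so the rounding error of at most `1` made by
natural-number division is negligible.
-/

/-- The integer `S_n = binom(6n,3n)·binom(3n,n) / (2(2n+1)·binom(2n,n))`. -/
def paperS (n : ℕ) : ℕ :=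
  Nat.choose (6 * n) (3 * n) * Nat.choose (3 * n) n /
    (2 * (2 * n + 1) * Nat.choose (2 * n) n)

open Filter Asymptotics Real
open scoped Nat

noncomputable def paperSReal (n : ℕ) : ℝ :=
  ((Nat.choose (6 * n) (3 * n) * Nat.choose (3 * n) n : ℕ) : ℝ) /
    ((2 * (2 * n + 1) * Nat.choose (2 * n) n : ℕ) : ℝ)

noncomputable def paperSAsymp (n : ℕ) : ℝ := 108 ^ n / (8 * n * √(n * π))

noncomputable def stirlingApprox (n : ℕ) : ℝ := √(2 * n * π) * (n / exp 1) ^ n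

theorem abs_natCast_div_sub_div_le_one (a b : ℕ) : |((a / b : ℕ) : ℝ) - a / b| ≤ 1 := by
  rw [← Nat.floor_div_eq_div (K := ℝ), abs_le]
  have hfloor_le := Nat.floor_le (by positivity : (0 : ℝ) ≤ a / b)
  have hlt_floor := Nat.lt_floor_add_one ((a : ℝ) / b)
  constructor <;> linarith

theorem abs_paperS_sub_paperSReal_le_one (n : ℕ) : |(paperS n : ℝ) - paperSReal n| ≤ 1 :=
  abs_natCast_div_sub_div_le_one _ _

theorem paperSReal_eq_factorial_ratio (n : ℕ) :
    paperSReal n = ((6 * n)! * n ! : ℝ) / ((3 * n)! * ((2 * n)! : ℝ) ^ 2) / (4 * n + 2) := by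
  rw [paperSReal, Nat.cast_mul, Nat.cast_mul, Nat.cast_choose ℝ (by omega : 3 * n ≤ 6 * n),
    Nat.cast_choose ℝ (by omega : n ≤ 3 * n), Nat.cast_choose ℝ (by omega : n ≤ 2 * n),
    show 6 * n - 3 * n = 3 * n by omega, show 3 * n - n = 2 * n by omega,
    show 2 * n - n = n by omega]
  push_cast
  field_simp
  ring

theorem stirlingApprox_mul (c n : ℕ) :
    stirlingApprox (c * n) = √c * (c ^ c) ^ n * √(2 * n * π) * ((n / exp 1) ^ n) ^ c := by
  have hsqrt : √(2 * ((c * n : ℕ) : ℝ) * π) = √c * √(2 * n * π) := by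
    rw [← Real.sqrt_mul c.cast_nonneg]; push_cast; ring_nf
  rw [stirlingApprox, hsqrt, ← pow_mul, ← pow_mul, mul_comm n c, Nat.cast_mul, mul_div_assoc,
    mul_pow]
  ring

theorem stirlingApprox_ratio (n : ℕ) (hn : n ≠ 0) :
    stirlingApprox (6 * n) * stirlingApprox n /
        (stirlingApprox (3 * n) * stirlingApprox (2 * n) ^ 2) = 108 ^ n / (2 * √(n * π)) := by
  rw [stirlingApprox_mul 6, stirlingApprox_mul 3, stirlingApprox_mul 2, stirlingApprox]
  have hsqrt2 : √(2 * n * π) = √2 * √(n * π) := by rw [mul_assoc, Real.sqrt_mul zero_le_two]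
  have hsqrt6 : √6 = √2 * √3 := by rw [← Real.sqrt_mul zero_le_two]; norm_num
  have hpow : ((6 : ℝ) ^ 6) ^ n = 108 ^ n * (3 ^ 3) ^ n * ((2 ^ 2) ^ n) ^ 2 := by
    rw [← pow_mul _ n 2, mul_comm n 2, pow_mul, ← mul_pow, ← mul_pow]; norm_num
  have hsqrt_pos : 0 < √(n * π) := by positivity
  have hpow_pos : 0 < ((n : ℝ) / exp 1) ^ n := by positivity
  push_cast
  rw [hsqrt2, hsqrt6, hpow]
  field_simp
  exact (Real.sq_sqrt zero_le_two).symm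

theorem isEquivalent_factorial_mul (c : ℕ) (hc : 0 < c) :
    (fun n ↦ ((c * n)! : ℝ)) ~[atTop] fun n ↦ stirlingApprox (c * n) :=
  Stirling.factorial_isEquivalent_stirling.comp_tendsto (tendsto_id.const_mul_atTop' hc)

theorem isEquivalent_factorial_ratio :
    (fun n : ℕ ↦ ((6 * n)! * n ! : ℝ) / ((3 * n)! * ((2 * n)! : ℝ) ^ 2)) ~[atTop]
      fun n ↦ 108 ^ n / (2 * √(n * π)) := by
  have h := ((isEquivalent_factorial_mul 6 (by norm_num)).mul
    Stirling.factorial_isEquivalent_stirling).div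
      ((isEquivalent_factorial_mul 3 (by norm_num)).mul
        ((isEquivalent_factorial_mul 2 (by norm_num)).pow 2))
  refine h.congr_right ?_
  filter_upwards [eventually_ne_atTop 0] with n hn
  exact stirlingApprox_ratio n hn

theorem paperSReal_isEquivalent : paperSReal ~[atTop] paperSAsymp := by
  have hlin : (fun n : ℕ ↦ (4 * n + 2 : ℝ)) ~[atTop] fun n ↦ 4 * n :=
    IsEquivalent.refl.add_const_of_norm_tendsto_atTop
      (tendsto_norm_atTop_atTop.comp (tendsto_natCast_atTop_atTop.const_mul_atTop four_pos))
  refine ((isEquivalent_factorial_ratio.div hlin).congr_left (.of_eq ?_)).congr_right (.of_eq ?_)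
  · funext n
    exact (paperSReal_eq_factorial_ratio n).symm
  · funext n
    rw [Pi.div_apply, paperSAsymp]
    ring

theorem paperSAsymp_pos : ∀ᶠ n in atTop, 0 < paperSAsymp n := by
  filter_upwards [eventually_ne_atTop 0] with n hn
  rw [paperSAsymp]
  positivity

theorem one_isLittleO_paperSAsymp : (fun _ ↦ (1 : ℝ)) =o[atTop] paperSAsymp := by
  have hbound : ∀ᶠ n : ℕ in atTop, ‖8 * n * √(n * π)‖ ≤ 16 * ‖(n : ℝ) ^ 2‖ := by
    filter_upwards [eventually_ge_atTop 1] with n hn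
    have hn' : (1 : ℝ) ≤ n := by exact_mod_cast hn
    have hsqrt : √(n * π) ≤ 2 * n :=
      Real.sqrt_le_iff.mpr ⟨by positivity, by nlinarith [Real.pi_le_four]⟩
    rw [Real.norm_of_nonneg (by positivity), Real.norm_of_nonneg (by positivity)]
    nlinarith
  have hlittle : (fun n : ℕ ↦ 8 * n * √(n * π)) =o[atTop] fun n ↦ (108 : ℝ) ^ n :=
    (IsBigO.of_bound 16 hbound).trans_isLittleO
      (isLittleO_pow_const_const_pow_of_one_lt 2 (by norm_num))
  rw [isLittleO_iff_tendsto' (paperSAsymp_pos.mono fun n hn h ↦ absurd h hn.ne')]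
  refine hlittle.tendsto_div_nhds_zero.congr' ?_
  filter_upwards with n
  rw [paperSAsymp, one_div, inv_div]

theorem paperS_isEquivalent_paperSReal : (fun n ↦ (paperS n : ℝ)) ~[atTop] paperSReal := by
  have hrounding : (fun n ↦ (paperS n : ℝ) - paperSReal n) =O[atTop] fun _ ↦ (1 : ℝ) :=
    isBigO_of_le _ fun n ↦ by
      rw [norm_one, Real.norm_eq_abs]
      exact abs_paperS_sub_paperSReal_le_one n
  exact hrounding.trans_isLittleO
    (one_isLittleO_paperSAsymp.trans_isBigO paperSReal_isEquivalent.symm.isBigO)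

theorem stmt_16 :
    Filter.Tendsto
      (fun n : ℕ =>
        (paperS n : ℝ) / (108 ^ n / (8 * (n : ℝ) * Real.sqrt ((n : ℝ) * Real.pi))))
      Filter.atTop (nhds 1) :=
  (isEquivalent_iff_tendsto_one (paperSAsymp_pos.mono fun _ hn ↦ hn.ne')).mp
    (paperS_isEquivalent_paperSReal.trans paperSReal_isEquivalent)
end
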